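/- For real d > 0, the fractional difference coefficients are absolutely summable: Σ_{j=0}^∞ |π_j(d)| < ∞, and moreover Σ_{j=0}^∞ π_j(d) = 0. -/
import Mathlib

/-- Fractional difference coefficients: π₀(d)=1, π_j(d)=((j-d-1)/j)·π_{j-1}(d). -/
noncomputable def fracPi (d : ℝ) : ℕ → ℝ
  | 0 => 1
  | (j + 1) => ((((j : ℝ) + 1) - d - 1) / ((j : ℝ) + 1)) * fracPi d j

lemma fracPi_succ (d : ℝ) (j : ℕ) :
    fracPi d (j + 1) = (((j : ℝ) - d) / ((j : ℝ) + 1)) * fracPi d j := by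
  show ((((j : ℝ) + 1) - d - 1) / ((j : ℝ) + 1)) * fracPi d j = _
  ring_nf

lemma fracPi_key (d : ℝ) : ∀ n : ℕ, ((n : ℝ) - d) * fracPi d n = -d * fracPi (d - 1) n := by
  intro n
  induction n with
  | zero => simp [fracPi]
  | succ n ih =>
    rw [fracPi_succ, fracPi_succ]
    push_cast
    linear_combination (((n : ℝ) + 1 - d) / ((n : ℝ) + 1)) * ih

lemma fracPi_sum (d : ℝ) : ∀ n : ℕ,
    ∑ j ∈ Finset.range (n + 1), fracPi d j = fracPi (d - 1) n := by
  intro n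
  induction n with
  | zero => simp [fracPi]
  | succ n ih =>
    rw [Finset.sum_range_succ, ih, fracPi_succ]
    have h1 : (n : ℝ) + 1 ≠ 0 := by positivity
    have key := fracPi_key d n
    have succd : fracPi (d - 1) (n + 1) = (((n : ℝ) + 1 - d) / ((n : ℝ) + 1)) * fracPi (d - 1) n := by
      rw [fracPi_succ]; ring_nf
    rw [succd]
    field_simp
    nlinarith [key]

/-- exponential decay bound for `fracPi (d-1)` beyond `N = ⌈d⌉₊`. -/
lemma fracPi_bound (d : ℝ) (hd : 0 < d) :
    ∀ n, ⌈d⌉₊ ≤ n → |fracPi (d - 1) n| ≤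
      |fracPi (d - 1) ⌈d⌉₊| * Real.exp (-(d * ∑ i ∈ Finset.Ico ⌈d⌉₊ n, 1 / ((i : ℝ) + 1))) := by
  set N := ⌈d⌉₊ with hN
  have hdN : d ≤ (N : ℝ) := Nat.le_ceil d
  intro n hn
  induction n, hn using Nat.le_induction with
  | base => simp
  | succ n hn ih =>
    have h1 : (0:ℝ) < (n : ℝ) + 1 := by positivity
    have hdn : d ≤ (n : ℝ) + 1 := hdN.trans (by exact_mod_cast Nat.le_succ_of_le hn)
    have hfact : fracPi (d - 1) (n + 1) = (1 - d / ((n : ℝ) + 1)) * fracPi (d - 1) n := by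
      rw [fracPi_succ]
      have : ((n : ℝ) - (d - 1)) / ((n : ℝ) + 1) = 1 - d / ((n : ℝ) + 1) := by
        field_simp; ring
      rw [this]
    have hf0 : 0 ≤ 1 - d / ((n : ℝ) + 1) := by
      rw [sub_nonneg, div_le_one h1]; exact hdn
    have hfe : 1 - d / ((n : ℝ) + 1) ≤ Real.exp (-(d / ((n : ℝ) + 1))) := by
      have := Real.add_one_le_exp (-(d / ((n : ℝ) + 1)))
      linarith
    rw [hfact, abs_mul, abs_of_nonneg hf0]
    calc (1 - d / ((n : ℝ) + 1)) * |fracPi (d - 1) n|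
        ≤ Real.exp (-(d / ((n : ℝ) + 1))) *
          (|fracPi (d - 1) N| * Real.exp (-(d * ∑ i ∈ Finset.Ico N n, 1 / ((i : ℝ) + 1)))) := by
          exact mul_le_mul hfe ih (abs_nonneg _) (Real.exp_pos _).le
      _ = |fracPi (d - 1) N| * Real.exp (-(d * ∑ i ∈ Finset.Ico N (n + 1), 1 / ((i : ℝ) + 1))) := by
          rw [Finset.sum_Ico_succ_top hn, mul_add, neg_add, Real.exp_add, mul_one_div]
          ring

lemma fracPi_tendsto_zero (d : ℝ) (hd : 0 < d) :
    Filter.Tendsto (fun n => fracPi (d - 1) n) Filter.atTop (nhds 0) := by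
  set N := ⌈d⌉₊ with hN
  have hsum : Filter.Tendsto (fun n => ∑ i ∈ Finset.Ico N n, 1 / ((i : ℝ) + 1))
      Filter.atTop Filter.atTop := by
    have h := Real.tendsto_sum_range_one_div_nat_succ_atTop
    have heq : (fun n => (∑ i ∈ Finset.range n, 1 / ((i : ℝ) + 1)) - ∑ i ∈ Finset.range N, 1 / ((i : ℝ) + 1))
        =ᶠ[Filter.atTop] (fun n => ∑ i ∈ Finset.Ico N n, 1 / ((i : ℝ) + 1)) := by
      filter_upwards [Filter.eventually_ge_atTop N] with n hn
      rw [Finset.sum_Ico_eq_sub _ hn]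
    exact Filter.Tendsto.congr' heq (Filter.tendsto_atTop_add_const_right _ _ h)
  have hexp : Filter.Tendsto
      (fun n => |fracPi (d - 1) N| * Real.exp (-(d * ∑ i ∈ Finset.Ico N n, 1 / ((i : ℝ) + 1))))
      Filter.atTop (nhds 0) := by
    have : Filter.Tendsto (fun n => -(d * ∑ i ∈ Finset.Ico N n, 1 / ((i : ℝ) + 1)))
        Filter.atTop Filter.atBot := by
      exact Filter.tendsto_neg_atBot_iff.mpr (Filter.Tendsto.const_mul_atTop hd hsum)
    have := Real.tendsto_exp_atBot.comp this
    simpa using this.const_mul (|fracPi (d - 1) N|)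
  refine squeeze_zero_norm' ?_ hexp
  filter_upwards [Filter.eventually_ge_atTop N] with n hn
  simpa [Real.norm_eq_abs] using fracPi_bound d hd n hn

lemma fracPi_sign (d : ℝ) (hd : 0 < d) :
    (∀ j, ⌈d⌉₊ ≤ j → 0 ≤ fracPi d j) ∨ (∀ j, ⌈d⌉₊ ≤ j → fracPi d j ≤ 0) := by
  set N := ⌈d⌉₊ with hN
  have hdN : d ≤ (N : ℝ) := Nat.le_ceil d
  have hstep : ∀ j, N ≤ j → 0 ≤ ((j : ℝ) - d) / ((j : ℝ) + 1) := by
    intro j hj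
    have : d ≤ (j : ℝ) := hdN.trans (by exact_mod_cast hj)
    have : (0:ℝ) ≤ (j : ℝ) - d := by linarith
    positivity
  rcases le_or_gt 0 (fracPi d N) with h | h
  · left; intro j hj
    induction j, hj using Nat.le_induction with
    | base => exact h
    | succ n hn ih => rw [fracPi_succ]; exact mul_nonneg (hstep n hn) ih
  · right; intro j hj
    induction j, hj using Nat.le_induction with
    | base => exact h.le
    | succ n hn ih => rw [fracPi_succ]; exact mul_nonpos_of_nonneg_of_nonpos (hstep n hn) ih

/-- For d > 0, the coefficients are absolutely summable and sum to zero. -/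
theorem fracPi_summable_and_sum_zero (d : ℝ) (hd : 0 < d) :
    Summable (fun j : ℕ => |fracPi d j|) ∧ ∑' j : ℕ, fracPi d j = 0 := by
  set N := ⌈d⌉₊ with hN
  have hN1 : 1 ≤ N := Nat.one_le_ceil_iff.mpr hd
  -- uniform bound on |fracPi (d-1)| beyond N
  have hb : ∀ m, N ≤ m → |fracPi (d - 1) m| ≤ |fracPi (d - 1) N| := by
    intro m hm
    refine (fracPi_bound d hd m hm).trans ?_
    have hsum : (0:ℝ) ≤ ∑ i ∈ Finset.Ico N m, 1 / ((i : ℝ) + 1) :=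
      Finset.sum_nonneg fun i _ => by positivity
    have : Real.exp (-(d * ∑ i ∈ Finset.Ico N m, 1 / ((i : ℝ) + 1))) ≤ 1 := by
      rw [Real.exp_le_one_iff]
      have : 0 ≤ d * ∑ i ∈ Finset.Ico N m, 1 / ((i : ℝ) + 1) := mul_nonneg hd.le hsum
      linarith
    nlinarith [abs_nonneg (fracPi (d - 1) N)]
  -- partial sums of the shifted sequence
  have hps : ∀ n : ℕ, ∑ j ∈ Finset.range n, fracPi d (N + j)
      = fracPi (d - 1) (N + n - 1) - fracPi (d - 1) (N - 1) := by
    intro n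
    induction n with
    | zero => simp
    | succ n ih =>
      rw [Finset.sum_range_succ, ih]
      have hm : N + (n + 1) - 1 = (N + n - 1) + 1 := by omega
      have hm2 : N + n - 1 + 1 = N + n := by omega
      have e1 := fracPi_sum d (N + n - 1 + 1)
      rw [Finset.sum_range_succ, fracPi_sum d (N + n - 1), hm2] at e1
      rw [hm, hm2]
      linarith [e1]
  -- summability of the absolute values of the shifted sequence
  have hshift : Summable (fun j : ℕ => |fracPi d (N + j)|) := by
    rcases fracPi_sign d hd with hs | hs
    · refine summable_of_sum_range_le (c := |fracPi (d - 1) N| + |fracPi (d - 1) (N - 1)|)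
        (fun n => abs_nonneg _) ?_
      intro n
      have heq : ∀ j ∈ Finset.range n, |fracPi d (N + j)| = fracPi d (N + j) := by
        intro j _; exact abs_of_nonneg (hs _ (Nat.le_add_right N j))
      rw [Finset.sum_congr rfl heq, hps n]
      rcases Nat.eq_zero_or_pos n with rfl | hn
      · simp only [Nat.add_zero, sub_self]
        positivity
      · have h3 : N ≤ N + n - 1 := by omega
        have := hb _ h3
        have := abs_nonneg (fracPi (d - 1) (N - 1))
        have := le_abs_self (fracPi (d - 1) (N + n - 1))
        have := neg_abs_le (fracPi (d - 1) (N - 1))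
        linarith
    · refine summable_of_sum_range_le (c := |fracPi (d - 1) N| + |fracPi (d - 1) (N - 1)|)
        (fun n => abs_nonneg _) ?_
      intro n
      have heq : ∀ j ∈ Finset.range n, |fracPi d (N + j)| = -fracPi d (N + j) := by
        intro j _; exact abs_of_nonpos (hs _ (Nat.le_add_right N j))
      rw [Finset.sum_congr rfl heq, Finset.sum_neg_distrib, hps n]
      rcases Nat.eq_zero_or_pos n with rfl | hn
      · simp only [Nat.add_zero, sub_self, neg_zero]
        positivity
      · have h3 : N ≤ N + n - 1 := by omega
        have := hb _ h3
        have := neg_abs_le (fracPi (d - 1) (N + n - 1))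
        have := le_abs_self (fracPi (d - 1) (N - 1))
        linarith
  have habs : Summable (fun j : ℕ => |fracPi d j|) := by
    rw [← summable_nat_add_iff N]
    exact hshift.congr (fun j => by rw [Nat.add_comm])
  refine ⟨habs, ?_⟩
  have hsum : Summable (fun j : ℕ => fracPi d j) := habs.of_abs
  have h1 : Filter.Tendsto (fun n => ∑ j ∈ Finset.range n, fracPi d j)
      Filter.atTop (nhds (∑' j, fracPi d j)) := hsum.hasSum.tendsto_sum_nat
  have h2 : Filter.Tendsto (fun n => ∑ j ∈ Finset.range (n + 1), fracPi d j)
      Filter.atTop (nhds (∑' j, fracPi d j)) := h1.comp (Filter.tendsto_add_atTop_nat 1)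
  have h3 : Filter.Tendsto (fun n => ∑ j ∈ Finset.range (n + 1), fracPi d j)
      Filter.atTop (nhds 0) := by
    refine (fracPi_tendsto_zero d hd).congr fun n => (fracPi_sum d n).symm
  exact tendsto_nhds_unique h2 h3
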